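/- Let G be a finite group, let S and T be G-sets, and suppose there exists a G-equivariant map ε : T → S. Assume that for every subgroup G' of G, every element x ∈ ℤ[T]₀ with Σ_{g∈G'} g•x = 0 lies in the additive subgroup generated by {g•y − y : g ∈ G', y ∈ ℤ[T]₀} (i.e., Ĥ^{-1}(G', ℤ[T]₀) = 0 for every subgroup G' of G). Then every additive map f : ℤ[S]₀ → ℤ[T]₀ with Σ_{g∈G} g•f = 0 lies in the additive subgroup of Hom(ℤ[S]₀,ℤ[T]₀) generated by the elements g•h − h with g ∈ G and h ∈ Hom(ℤ[S]₀,ℤ[T]₀). Equivalently, Ĥ^{-1}(G, Hom(ℤ[S]₀, ℤ[T]₀)) = 0. -/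
import Mathlib


open scoped Classical

/-- The augmentation map `ℤ[S] → ℤ`, `∑ n_s · s ↦ ∑ n_s`. -/
noncomputable def aug (S : Type*) : (S →₀ ℤ) →+ ℤ :=
  Finsupp.liftAddHom fun _ => AddMonoidHom.id ℤ

/-- The action of `g : G` on `ℤ[S]`, permuting the basis elements. -/
noncomputable def permHom {G : Type*} [Group G] {S : Type*} [MulAction G S]
    (g : G) : (S →₀ ℤ) →+ (S →₀ ℤ) :=
  Finsupp.mapDomain.addMonoidHom (fun s => g • s)

lemma aug_permHom {G : Type*} [Group G] {S : Type*} [MulAction G S] (g : G) (x : S →₀ ℤ) :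
    aug S (permHom g x) = aug S x := by
  have h : (aug S).comp (permHom (G := G) (S := S) g) = aug S := by
    apply Finsupp.addHom_ext
    intro s n
    simp [aug, permHom, Finsupp.mapDomain.addMonoidHom, Finsupp.mapDomain_single]
  exact DFunLike.congr_fun h x

/-- The action of `g : G` on `ℤ[S]₀ = ker(aug)`. -/
noncomputable def permHom0 {G : Type*} [Group G] {S : Type*} [MulAction G S]
    (g : G) : ↥(aug S).ker →+ ↥(aug S).ker :=
  AddMonoidHom.codRestrict ((permHom g).comp (aug S).ker.subtype) (aug S).ker
    (fun x => by
      have hx : aug S (x : S →₀ ℤ) = 0 := AddMonoidHom.mem_ker.mp x.2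
      simpa [AddMonoidHom.mem_ker, aug_permHom] using hx)

/-- The action of `g : G` on `Hom(ℤ[S]₀, ℤ[T]₀)`: `(g • f)(m) = g • f (g⁻¹ • m)`. -/
noncomputable def homAct00 {G S T : Type*} [Group G] [MulAction G S] [MulAction G T]
    (g : G) (f : ↥(aug S).ker →+ ↥(aug T).ker) : ↥(aug S).ker →+ ↥(aug T).ker :=
  (permHom0 g).comp (f.comp (permHom0 g⁻¹))

section auxbasic
variable {G : Type*} [Group G] {S : Type*} [MulAction G S]

lemma aug_single' (s : S) (n : ℤ) : aug S (Finsupp.single s n) = n := by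
  simp [aug]

lemma permHom_single' (g : G) (s : S) (n : ℤ) :
    permHom g (Finsupp.single s n) = Finsupp.single (g • s) n := by
  simp [permHom, Finsupp.mapDomain.addMonoidHom, Finsupp.mapDomain_single]

lemma permHom_apply' (g : G) (x : S →₀ ℤ) (s : S) :
    (permHom g x) s = x (g⁻¹ • s) := by
  have h : permHom g x = Finsupp.mapDomain (fun s => g • s) x := rfl
  rw [h, show s = g • (g⁻¹ • s) by simp,
    Finsupp.mapDomain_apply (MulAction.injective g)]
  simp

lemma homext' {A : Type*} [AddCommGroup A] {f g : (S →₀ ℤ) →+ A}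
    (h : ∀ s : S, f (Finsupp.single s 1) = g (Finsupp.single s 1)) : f = g := by
  apply Finsupp.addHom_ext; intro s n
  have e : Finsupp.single s n = n • Finsupp.single s (1 : ℤ) := by
    simp [Finsupp.smul_single]
  rw [e, map_zsmul, map_zsmul, h]

lemma permHom0_coe (g : G) (x : ↥(aug S).ker) :
    ((permHom0 g x : ↥(aug S).ker) : S →₀ ℤ) = permHom g (x : S →₀ ℤ) := rfl

lemma permHom0_mul (g g' : G) (x : ↥(aug S).ker) :
    permHom0 g (permHom0 g' x) = permHom0 (g * g') x := by
  apply Subtype.ext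
  rw [permHom0_coe, permHom0_coe, permHom0_coe]
  show Finsupp.mapDomain _ (Finsupp.mapDomain _ _) = _
  rw [← Finsupp.mapDomain_comp]
  congr 1
  funext s
  simp [mul_smul]

lemma permHom0_one (x : ↥(aug S).ker) : permHom0 (1 : G) x = x := by
  apply Subtype.ext
  rw [permHom0_coe]
  show Finsupp.mapDomain _ _ = _
  have h1 : (fun s : S => (1 : G) • s) = id := by funext s; simp
  rw [h1, Finsupp.mapDomain_id]

lemma permHom0_inv_cancel (g : G) (x : ↥(aug S).ker) :
    permHom0 g (permHom0 g⁻¹ x) = x := by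
  rw [permHom0_mul, mul_inv_cancel, permHom0_one]

end auxbasic

section auxhom
variable {G : Type*} [Group G] {S T : Type*} [MulAction G S] [MulAction G T]

/-- additive map `ℤ[S] → ℤ[T]₀` from a function on basis elements -/
noncomputable def ofFun (v : S → ↥(aug T).ker) : (S →₀ ℤ) →+ ↥(aug T).ker :=
  Finsupp.liftAddHom fun s => zmultiplesHom _ (v s)

lemma ofFun_single (v : S → ↥(aug T).ker) (s : S) (n : ℤ) :
    ofFun v (Finsupp.single s n) = n • v s := by
  simp [ofFun]

/-- action of `G` on `Hom(ℤ[S], ℤ[T]₀)` -/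
noncomputable def homAct0 (g : G) (Ψ : (S →₀ ℤ) →+ ↥(aug T).ker) :
    (S →₀ ℤ) →+ ↥(aug T).ker :=
  (permHom0 g).comp (Ψ.comp (permHom g⁻¹))

lemma homAct0_apply (g : G) (Ψ : (S →₀ ℤ) →+ ↥(aug T).ker) (x : S →₀ ℤ) :
    homAct0 (T := T) g Ψ x = permHom0 g (Ψ (permHom g⁻¹ x)) := rfl

lemma homAct0_single (g : G) (Ψ : (S →₀ ℤ) →+ ↥(aug T).ker) (s : S) :
    homAct0 (T := T) g Ψ (Finsupp.single s 1) =
      permHom0 g (Ψ (Finsupp.single (g⁻¹ • s) 1)) := by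
  rw [homAct0_apply, permHom_single']

lemma homAct0_sub (g : G) (Ψ Φ : (S →₀ ℤ) →+ ↥(aug T).ker) :
    homAct0 (T := T) g (Ψ - Φ) = homAct0 g Ψ - homAct0 g Φ := by
  apply homext'; intro s
  simp [homAct0_apply, AddMonoidHom.sub_apply, map_sub]

lemma homAct0_mul (g g' : G) (Ψ : (S →₀ ℤ) →+ ↥(aug T).ker) :
    homAct0 (T := T) g (homAct0 g' Ψ) = homAct0 (g * g') Ψ := by
  apply homext'; intro s
  rw [homAct0_apply, homAct0_apply, homAct0_apply, permHom0_mul]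
  congr 2
  show Finsupp.mapDomain _ (Finsupp.mapDomain _ _) = Finsupp.mapDomain _ _
  rw [← Finsupp.mapDomain_comp]
  congr 1
  funext u
  simp [mul_smul]

end auxhom
section auxnorm
variable {G : Type*} [Group G] [Fintype G] {S T : Type*} [MulAction G S] [MulAction G T]

lemma sum_apply' {A : Type*} [AddCommGroup A] (F : G → ((S →₀ ℤ) →+ A)) (x : S →₀ ℤ) :
    (∑ g : G, F g) x = ∑ g : G, F g x := by
  exact map_sum (AddMonoidHom.eval x) F Finset.univ

lemma homAct0_sum (g : G) (F : G → ((S →₀ ℤ) →+ ↥(aug T).ker)) :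
    homAct0 (T := T) g (∑ γ : G, F γ) = ∑ γ : G, homAct0 g (F γ) := by
  apply homext'; intro s
  rw [sum_apply', homAct0_apply, sum_apply', map_sum]
  simp only [homAct0_apply]

lemma nrm_twist (γ : G) (Ψ : (S →₀ ℤ) →+ ↥(aug T).ker) :
    (∑ g : G, homAct0 g (homAct0 γ Ψ)) = ∑ g : G, homAct0 (T := T) g Ψ := by
  have h1 : ∀ g : G, homAct0 g (homAct0 γ Ψ) = homAct0 (T := T) (g * γ) Ψ :=
    fun g => homAct0_mul g γ Ψ
  rw [Finset.sum_congr rfl (fun g _ => h1 g)]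
  exact Fintype.sum_equiv (Equiv.mulRight γ) _ _ (fun g => rfl)

lemma nrm_diff (γ : G) (k : (S →₀ ℤ) →+ ↥(aug T).ker) :
    (∑ g : G, homAct0 g (homAct0 γ k - k)) = 0 := by
  have : ∀ g : G, homAct0 (T := T) g (homAct0 γ k - k)
      = homAct0 g (homAct0 γ k) - homAct0 g k := fun g => homAct0_sub g _ _
  rw [Finset.sum_congr rfl (fun g _ => this g), Finset.sum_sub_distrib, nrm_twist, sub_self]

end auxnorm

section reps
variable (G : Type*) [Group G] {S : Type*} [MulAction G S]

noncomputable def rep (s : S) : S := (Quotient.mk (MulAction.orbitRel G S) s).out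

lemma rep_spec (s : S) : ∃ g : G, g • rep G s = s := by
  have h := Quotient.mk_out (s := MulAction.orbitRel G S) s
  rw [MulAction.orbitRel_apply] at h
  obtain ⟨g, hg⟩ := h
  exact ⟨g⁻¹, by rw [rep, ← hg]; simp⟩

lemma rep_smul (g : G) (s : S) : rep G (g • s) = rep G s := by
  unfold rep
  congr 1
  exact Quotient.sound (MulAction.mem_orbit s g)

lemma rep_rep (s : S) : rep G (rep G s) = rep G s := by
  obtain ⟨g, hg⟩ := rep_spec G s
  have h := rep_smul G g (rep G s)
  rw [hg] at h
  exact h.symm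

end reps
section collapse
variable {G : Type*} [Group G] [Fintype G] {T : Type*} [MulAction G T]

lemma collapse (H : Subgroup G) (μ : ↥(aug T).ker)
    (hμ : μ ∈ AddSubgroup.closure
      {z : ↥(aug T).ker | ∃ g ∈ H, ∃ y : ↥(aug T).ker, z = permHom0 g y - y}) :
    ∃ y : G → ↥(aug T).ker,
      μ = ∑ h : G, (if h ∈ H then permHom0 h (y h) - y h else 0) := by
  let D : AddSubgroup ↥(aug T).ker :=
  { carrier := {μ | ∃ y : G → ↥(aug T).ker,
      μ = ∑ h : G, (if h ∈ H then permHom0 h (y h) - y h else 0)},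
    zero_mem' := ⟨0, by simp⟩,
    add_mem' := by
      rintro μ₁ μ₂ ⟨y₁, rfl⟩ ⟨y₂, rfl⟩
      refine ⟨y₁ + y₂, ?_⟩
      rw [← Finset.sum_add_distrib]
      apply Finset.sum_congr rfl
      intro h _
      by_cases hc : h ∈ H
      · simp only [hc, if_true, Pi.add_apply, map_add]
        abel
      · simp [hc],
    neg_mem' := by
      rintro μ ⟨y, rfl⟩
      refine ⟨-y, ?_⟩
      rw [← Finset.sum_neg_distrib]
      apply Finset.sum_congr rfl
      intro h _
      by_cases hc : h ∈ H
      · simp only [hc, if_true, Pi.neg_apply, map_neg]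
        abel
      · simp [hc] }
  have hle : AddSubgroup.closure
      {z : ↥(aug T).ker | ∃ g ∈ H, ∃ y : ↥(aug T).ker, z = permHom0 g y - y} ≤ D := by
    rw [AddSubgroup.closure_le]
    rintro z ⟨g, hg, y, rfl⟩
    refine ⟨fun h => if h = g then y else 0, ?_⟩
    rw [Finset.sum_eq_single g]
    · simp [hg]
    · intro b _ hb
      simp [hb]
    · intro hgg
      exact absurd (Finset.mem_univ g) hgg
  exact hle hμ

end collapse
section stepD
variable {G S T : Type*} [Group G] [Fintype G] [MulAction G S] [MulAction G T]

lemma stepD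
    (hT : ∀ (G' : Subgroup G) (x : ↥(aug T).ker),
        (∑ g : G', permHom0 (g : G) x) = 0 →
        x ∈ AddSubgroup.closure
          {z : ↥(aug T).ker | ∃ g ∈ G', ∃ y : ↥(aug T).ker, z = permHom0 g y - y})
    (Ψ : (S →₀ ℤ) →+ ↥(aug T).ker)
    (hN : (∑ g : G, homAct0 g Ψ) = 0) :
    ∃ k Y : G → ((S →₀ ℤ) →+ ↥(aug T).ker),
      Ψ = (∑ γ : G, (homAct0 γ (k γ) - k γ)) + ∑ h : G, (homAct0 h (Y h) - Y h) := by
  classical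
  set ψ : S → ↥(aug T).ker := fun s => Ψ (Finsupp.single s 1) with hψ
  set a : S → G := fun s => Classical.choose (rep_spec G s) with haa
  have ha : ∀ s : S, (a s) • rep G s = s := fun s => Classical.choose_spec (rep_spec G s)
  set k : G → ((S →₀ ℤ) →+ ↥(aug T).ker) := fun γ => ofFun (fun s' =>
    if rep G s' = s' ∧ a (γ • s') = γ then permHom0 γ⁻¹ (ψ (γ • s')) else 0) with hk
  have hksingle : ∀ (γ : G) (s : S), k γ (Finsupp.single s 1) =
      (if rep G s = s ∧ a (γ • s) = γ then permHom0 γ⁻¹ (ψ (γ • s)) else 0) := by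
    intro γ s
    rw [hk]
    rw [ofFun_single, one_smul]
  have hk1 : ∀ (γ : G) (s : S),
      homAct0 γ (k γ) (Finsupp.single s 1) = (if a s = γ then ψ s else 0) := by
    intro γ s
    rw [homAct0_single, hksingle, smul_inv_smul]
    by_cases h : a s = γ
    · have h1 : γ⁻¹ • s = rep G s := by
        conv_lhs => rw [← ha s]
        rw [h, inv_smul_smul]
      rw [if_pos ⟨by rw [h1, rep_rep], h⟩, permHom0_inv_cancel, if_pos h]
    · rw [if_neg (fun hc => h hc.2), map_zero, if_neg h]
  set Φ : (S →₀ ℤ) →+ ↥(aug T).ker := Ψ - ∑ γ : G, (homAct0 γ (k γ) - k γ) with hΦdef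
  have hΦval : ∀ s : S, Φ (Finsupp.single s 1) = ∑ γ : G,
      (if rep G s = s ∧ a (γ • s) = γ then permHom0 γ⁻¹ (ψ (γ • s)) else 0) := by
    intro s
    rw [hΦdef, AddMonoidHom.sub_apply, sum_apply']
    simp only [AddMonoidHom.sub_apply]
    rw [Finset.sum_sub_distrib, Finset.sum_congr rfl (fun γ _ => hk1 γ s),
      Finset.sum_ite_eq Finset.univ (a s) (fun _ => ψ s)]
    simp only [Finset.mem_univ, if_true]
    rw [show Ψ (Finsupp.single s 1) = ψ s from rfl, sub_sub_cancel]
    exact Finset.sum_congr rfl (fun γ _ => hksingle γ s)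
  have hΦ0 : ∀ s : S, rep G s ≠ s → Φ (Finsupp.single s 1) = 0 := by
    intro s hs
    rw [hΦval]
    apply Finset.sum_eq_zero
    intro γ _
    exact if_neg (fun hc => hs hc.1)
  have hNΦ : (∑ g : G, homAct0 g Φ) = 0 := by
    have h1 : ∀ g : G, homAct0 (T := T) g Φ
        = homAct0 g Ψ - ∑ γ : G, homAct0 g (homAct0 γ (k γ) - k γ) := by
      intro g
      rw [hΦdef, homAct0_sub, homAct0_sum]
    rw [Finset.sum_congr rfl (fun g _ => h1 g), Finset.sum_sub_distrib, hN,
      Finset.sum_comm, Finset.sum_congr rfl (fun γ _ => nrm_diff γ (k γ))]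
    simp
  have hstab : ∀ s : S, rep G s = s →
      (∑ h : (MulAction.stabilizer G s), permHom0 ((h : G)) (Φ (Finsupp.single s 1))) = 0 := by
    intro s hs
    have h0 : (∑ g : G, homAct0 g Φ) (Finsupp.single s 1) = 0 := by rw [hNΦ]; rfl
    rw [sum_apply'] at h0
    have h1 : ∀ g : G, homAct0 g Φ (Finsupp.single s 1)
        = (if g ∈ MulAction.stabilizer G s then permHom0 g (Φ (Finsupp.single s 1)) else 0) := by
      intro g
      rw [homAct0_single]
      by_cases hg : g ∈ MulAction.stabilizer G s
      · have hg' : g • s = s := hg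
        have h2 : g⁻¹ • s = s := by
          conv_lhs => rw [← hg']
          rw [inv_smul_smul]
        rw [h2, if_pos hg]
      · rw [if_neg hg]
        have hne : rep G (g⁻¹ • s) ≠ g⁻¹ • s := by
          rw [rep_smul, hs]
          intro hc
          apply hg
          show g • s = s
          conv_lhs => rw [hc]
          rw [smul_inv_smul]
        rw [hΦ0 _ hne, map_zero]
    rw [Finset.sum_congr rfl (fun g _ => h1 g), ← Finset.sum_filter] at h0
    rw [Finset.sum_subtype (p := fun g => g ∈ MulAction.stabilizer G s)
      (Finset.filter (fun g => g ∈ MulAction.stabilizer G s) Finset.univ)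
      (fun x => by simp) (fun g => permHom0 g (Φ (Finsupp.single s 1)))] at h0
    exact h0
  have hcollapse : ∀ s : S, rep G s = s → ∃ y : G → ↥(aug T).ker,
      Φ (Finsupp.single s 1) = ∑ h : G,
        (if h ∈ MulAction.stabilizer G s then permHom0 h (y h) - y h else 0) :=
    fun s hs => collapse _ _ (hT (MulAction.stabilizer G s) _ (hstab s hs))
  set Yf : S → G → ↥(aug T).ker := fun s =>
    if hs : rep G s = s then Classical.choose (hcollapse s hs) else 0 with hYf
  set Y : G → ((S →₀ ℤ) →+ ↥(aug T).ker) := fun h => ofFun (fun s =>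
    if rep G s = s ∧ h • s = s then Yf s h else 0) with hY
  have hYsingle : ∀ (h : G) (s : S), Y h (Finsupp.single s 1) =
      (if rep G s = s ∧ h • s = s then Yf s h else 0) := by
    intro h s
    rw [hY, ofFun_single, one_smul]
  have hYsum : Φ = ∑ h : G, (homAct0 h (Y h) - Y h) := by
    apply homext'
    intro s
    rw [sum_apply']
    simp only [AddMonoidHom.sub_apply]
    by_cases hs : rep G s = s
    · have hspec : Φ (Finsupp.single s 1) = ∑ h : G,
          (if h ∈ MulAction.stabilizer G s then permHom0 h (Yf s h) - Yf s h else 0) := by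
        have := Classical.choose_spec (hcollapse s hs)
        rw [hYf]
        simp only [dif_pos hs]
        exact this
      simp only [MulAction.mem_stabilizer_iff] at hspec
      rw [hspec]
      apply Finset.sum_congr rfl
      intro h _
      rw [homAct0_single, hYsingle, hYsingle]
      by_cases hh : h • s = s
      · have h2 : h⁻¹ • s = s := by
          conv_lhs => rw [← hh]
          rw [inv_smul_smul]
        rw [h2, if_pos (⟨hs, hh⟩ : rep G s = s ∧ h • s = s), if_pos hh]
      · have h3 : ¬(rep G (h⁻¹ • s) = h⁻¹ • s ∧ h • (h⁻¹ • s) = h⁻¹ • s) := by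
          rintro ⟨c1, -⟩
          rw [rep_smul, hs] at c1
          apply hh
          conv_lhs => rw [c1]
          rw [smul_inv_smul]
        rw [if_neg h3, map_zero,
          if_neg (fun c : rep G s = s ∧ h • s = s => hh c.2), if_neg hh, sub_zero]
    · rw [hΦ0 s hs]
      symm
      apply Finset.sum_eq_zero
      intro h _
      rw [homAct0_single, hYsingle, hYsingle]
      have h3 : ¬(rep G (h⁻¹ • s) = h⁻¹ • s ∧ h • (h⁻¹ • s) = h⁻¹ • s) := by
        rintro ⟨c1, c2⟩
        rw [smul_inv_smul] at c2
        rw [← c2] at c1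
        exact hs c1
      rw [if_neg h3, map_zero,
        if_neg (fun c : rep G s = s ∧ h • s = s => hs c.1), sub_zero]
  refine ⟨k, Y, ?_⟩
  rw [← hYsum, hΦdef]
  abel

end stepD
section counting
variable {G : Type*} [Group G] [Fintype G] {T : Type*} [MulAction G T]

lemma card_fiber (t y : T) (g₀ : G) (hg₀ : g₀ • t = y) :
    (Finset.filter (fun g : G => g • t = y) Finset.univ).card
      = Fintype.card (MulAction.stabilizer G t) := by
  rw [← Fintype.card_subtype]
  apply Fintype.card_congr
  refine
    { toFun := fun g => ⟨g₀⁻¹ * g.1, ?_⟩,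
      invFun := fun h => ⟨g₀ * h.1, ?_⟩,
      left_inv := ?_, right_inv := ?_ }
  · show (g₀⁻¹ * g.1) • t = t
    rw [mul_smul, g.2, ← hg₀, inv_smul_smul]
  · show (g₀ * h.1) • t = y
    have h2 : h.1 • t = t := h.2
    rw [mul_smul, h2, hg₀]
  · intro g; ext; simp
  · intro h; ext; simp

lemma dvd_sum_orbit (t : T) (c : T → ℤ) :
    (Fintype.card (MulAction.stabilizer G t) : ℤ) ∣ ∑ g : G, c (g • t) := by
  classical
  have hmaps : ∀ g ∈ (Finset.univ : Finset G),
      g • t ∈ Finset.image (fun g : G => g • t) Finset.univ :=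
    fun g _ => Finset.mem_image_of_mem _ (Finset.mem_univ g)
  rw [← Finset.sum_fiberwise_of_maps_to hmaps (fun g => c (g • t))]
  have h1 : ∀ y ∈ Finset.image (fun g : G => g • t) Finset.univ,
      (∑ g ∈ Finset.filter (fun g : G => g • t = y) Finset.univ, c (g • t))
        = (Fintype.card (MulAction.stabilizer G t) : ℤ) * c y := by
    intro y hy
    obtain ⟨g₀, -, hg₀⟩ := Finset.mem_image.mp hy
    rw [Finset.sum_congr rfl (fun g hg => by rw [(Finset.mem_filter.mp hg).2]),
      Finset.sum_const, card_fiber t y g₀ hg₀]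
    simp [nsmul_eq_mul]
  rw [Finset.sum_congr rfl h1, ← Finset.mul_sum]
  exact Dvd.intro _ rfl

lemma norm_exists (m : T →₀ ℤ)
    (hinv : ∀ (g : G) (t : T), m (g • t) = m t)
    (hdvd : ∀ t : T, (Fintype.card (MulAction.stabilizer G t) : ℤ) ∣ m t) :
    ∃ m₀ : T →₀ ℤ, (∑ g : G, permHom g m₀) = m := by
  classical
  set v : T → ℤ := fun t =>
    if rep G t = t then m t / (Fintype.card (MulAction.stabilizer G t) : ℤ) else 0 with hv
  have hsupp : ∀ t : T, v t ≠ 0 → t ∈ m.support := by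
    intro t ht
    rw [Finsupp.mem_support_iff]
    intro hmt
    apply ht
    rw [hv]
    simp only [hmt, Int.zero_ediv, ite_self]
  refine ⟨Finsupp.onFinset m.support v hsupp, ?_⟩
  ext t
  rw [Finsupp.finset_sum_apply]
  have h1 : ∀ g : G, (permHom g (Finsupp.onFinset m.support v hsupp)) t = v (g⁻¹ • t) := by
    intro g
    rw [permHom_apply']
    rfl
  rw [Finset.sum_congr rfl (fun g _ => h1 g)]
  rw [show (∑ g : G, v (g⁻¹ • t)) = ∑ g : G, v (g • t) from
    Fintype.sum_equiv (Equiv.inv G) _ _ (fun g => rfl)]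
  obtain ⟨g₀, hg₀⟩ := rep_spec G t
  set t₀ := rep G t with ht₀
  have hre : (∑ g : G, v (g • t)) = ∑ g : G, v (g • t₀) := by
    refine (Fintype.sum_equiv (Equiv.mulRight g₀⁻¹) (fun g => v (g • t₀))
      (fun g => v (g • t)) ?_).symm
    intro g
    simp only [Equiv.coe_mulRight]
    rw [mul_smul, ← hg₀, inv_smul_smul]
  rw [hre]
  have h2 : ∀ g : G, v (g • t₀) = if g • t₀ = t₀ then m t₀ / (Fintype.card (MulAction.stabilizer G t₀) : ℤ) else 0 := by
    intro g
    by_cases hgt : g • t₀ = t₀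
    · rw [if_pos hgt, hv]
      simp only [hgt]
      rw [if_pos]
      rw [ht₀, rep_rep]
    · rw [if_neg hgt, hv]
      simp only []
      rw [if_neg]
      intro hc
      apply hgt
      rw [← hc]
      rw [rep_smul, ht₀, rep_rep]
  rw [Finset.sum_congr rfl (fun g _ => h2 g), ← Finset.sum_filter, Finset.sum_const]
  have h3 : (Finset.filter (fun g : G => g • t₀ = t₀) Finset.univ).card
      = Fintype.card (MulAction.stabilizer G t₀) :=
    card_fiber t₀ t₀ 1 (one_smul G t₀)
  rw [h3]
  rw [nsmul_eq_mul]
  rw [Int.mul_ediv_cancel' (hdvd t₀)]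
  rw [← hg₀, hinv]
end counting
section mainprep
variable {G S T : Type*} [Group G] [Fintype G] [MulAction G S] [MulAction G T]

lemma res_homAct0 (g : G) (Ψ : (S →₀ ℤ) →+ ↥(aug T).ker) :
    (homAct0 g Ψ).comp (aug S).ker.subtype
      = homAct00 g (Ψ.comp (aug S).ker.subtype) := by
  apply AddMonoidHom.ext
  intro q
  rfl

lemma comp_sum_subtype {ι' : Type*} (u : Finset ι') (A : ι' → ((S →₀ ℤ) →+ ↥(aug T).ker)) :
    (∑ i ∈ u, A i).comp (aug S).ker.subtype = ∑ i ∈ u, (A i).comp (aug S).ker.subtype := by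
  apply AddMonoidHom.ext
  intro q
  calc ((∑ i ∈ u, A i).comp (aug S).ker.subtype) q
      = (∑ i ∈ u, A i) ((aug S).ker.subtype q) := rfl
    _ = ∑ i ∈ u, A i ((aug S).ker.subtype q) :=
        map_sum (AddMonoidHom.eval ((aug S).ker.subtype q)) A u
    _ = ∑ i ∈ u, ((A i).comp (aug S).ker.subtype) q := rfl
    _ = (∑ i ∈ u, (A i).comp (aug S).ker.subtype) q :=
        (map_sum (AddMonoidHom.eval q) (fun i => (A i).comp (aug S).ker.subtype) u).symm

/-- projection of `ℤ[S]` onto `ℤ[S]₀` along `single s₀ 1` -/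
noncomputable def projKer (s₀ : S) : (S →₀ ℤ) →+ ↥(aug S).ker :=
  AddMonoidHom.codRestrict
    (AddMonoidHom.id _ - (Finsupp.singleAddHom s₀).comp (aug S)) (aug S).ker
    (fun x => by
      simp only [AddMonoidHom.mem_ker, AddMonoidHom.sub_apply, AddMonoidHom.id_apply,
        AddMonoidHom.comp_apply, Finsupp.singleAddHom_apply, map_sub]
      rw [aug_single']
      exact sub_self _)

lemma projKer_coe (s₀ : S) (x : S →₀ ℤ) :
    ((projKer s₀ x : ↥(aug S).ker) : S →₀ ℤ) = x - Finsupp.single s₀ (aug S x) := rfl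

lemma projKer_subtype (s₀ : S) (q : ↥(aug S).ker) : projKer s₀ ((aug S).ker.subtype q) = q := by
  apply Subtype.ext
  rw [projKer_coe]
  have hq : aug S (q : S →₀ ℤ) = 0 := q.2
  rw [AddSubgroup.coe_subtype, hq, Finsupp.single_zero, sub_zero]

end mainprep

/-- Lemma "H-10S(3)": if there is a `G`-map `ε : T → S` and `Ĥ⁻¹(G', ℤ[T]₀) = 0` for
every subgroup `G'` of `G`, then `Ĥ⁻¹(G, Hom(ℤ[S]₀, ℤ[T]₀)) = 0`. -/
theorem stmt4 {G S T : Type*} [Group G] [Fintype G] [MulAction G S] [MulAction G T]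
    (ε : T → S) (hε : ∀ (g : G) (t : T), ε (g • t) = g • ε t)
    (hT : ∀ (G' : Subgroup G) (x : ↥(aug T).ker),
        (∑ g : G', permHom0 (g : G) x) = 0 →
        x ∈ AddSubgroup.closure
          {z : ↥(aug T).ker | ∃ g ∈ G', ∃ y : ↥(aug T).ker, z = permHom0 g y - y})
    (f : ↥(aug S).ker →+ ↥(aug T).ker)
    (hf : (∑ g : G, homAct00 g f) = 0) :
    f ∈ AddSubgroup.closure
      {x : ↥(aug S).ker →+ ↥(aug T).ker |
        ∃ (g : G) (h : ↥(aug S).ker →+ ↥(aug T).ker), x = homAct00 g h - h} := by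
  classical
  by_cases hTe : IsEmpty T
  · have hf0 : f = 0 := by
      apply AddMonoidHom.ext
      intro q
      apply Subtype.ext
      apply Finsupp.ext
      intro t
      exact (hTe.false t).elim
    rw [hf0]
    exact AddSubgroup.zero_mem _
  · rw [not_isEmpty_iff] at hTe
    obtain ⟨t₀⟩ := hTe
    set s₀ : S := ε t₀ with hs₀
    set F : (S →₀ ℤ) →+ ↥(aug T).ker := f.comp (projKer s₀) with hF
    have hresF : F.comp (aug S).ker.subtype = f := by
      apply AddMonoidHom.ext
      intro q
      show f (projKer s₀ ((aug S).ker.subtype q)) = f q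
      rw [projKer_subtype]
    set N : (S →₀ ℤ) →+ ↥(aug T).ker := ∑ g : G, homAct0 g F with hN
    have hkerN : ∀ q : ↥(aug S).ker, N ((aug S).ker.subtype q) = 0 := by
      intro q
      have h1 : N.comp (aug S).ker.subtype = ∑ g : G, homAct00 g f := by
        rw [hN, comp_sum_subtype]
        apply Finset.sum_congr rfl
        intro g _
        rw [res_homAct0, hresF]
      have h2 := DFunLike.congr_fun h1 q
      rw [hf] at h2
      exact h2
    set m : ↥(aug T).ker := N (Finsupp.single s₀ 1) with hm
    have hNval : ∀ x : S →₀ ℤ, N x = (aug S x) • m := by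
      intro x
      have hx : x - Finsupp.single s₀ (aug S x) ∈ (aug S).ker := by
        rw [AddMonoidHom.mem_ker, map_sub, aug_single', sub_self]
      have h2 := hkerN ⟨_, hx⟩
      have h3 : N (x - Finsupp.single s₀ (aug S x)) = 0 := h2
      rw [map_sub, sub_eq_zero] at h3
      rw [h3, show Finsupp.single s₀ (aug S x) = (aug S x) • Finsupp.single s₀ (1 : ℤ) by
        rw [Finsupp.smul_single, smul_eq_mul, mul_one], map_zsmul]
    have hNinv : ∀ g : G, homAct0 g N = N := by
      intro g
      rw [hN, homAct0_sum]
      rw [Finset.sum_congr rfl (fun h _ => homAct0_mul g h F)]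
      exact Fintype.sum_equiv (Equiv.mulLeft g) _ _ (fun h => rfl)
    have hminv : ∀ g : G, permHom0 g m = m := by
      intro g
      have h1 := DFunLike.congr_fun (hNinv g) (Finsupp.single s₀ 1)
      rw [homAct0_single] at h1
      have h2 : N (Finsupp.single (g⁻¹ • s₀) 1) = m := by
        rw [hNval, aug_single', one_smul]
      rw [h2] at h1
      rw [h1, ← hm]
    have hmcoeinv : ∀ (g : G) (t : T), (m : T →₀ ℤ) (g • t) = (m : T →₀ ℤ) t := by
      intro g t
      have h1 : (permHom g⁻¹ (m : T →₀ ℤ)) t = (m : T →₀ ℤ) (g • t) := by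
        rw [permHom_apply', inv_inv]
      rw [← h1, ← permHom0_coe, hminv]
    have hmdvd : ∀ t : T,
        (Fintype.card (MulAction.stabilizer G t) : ℤ) ∣ (m : T →₀ ℤ) t := by
      intro t
      set c : T → ℤ := fun t' => ((F (Finsupp.single (ε t') 1) : ↥(aug T).ker) : T →₀ ℤ) t'
        with hc
      have h1 : (m : T →₀ ℤ) t = ∑ g : G, c (g⁻¹ • t) := by
        have h2 : m = N (Finsupp.single (ε t) 1) := by
          rw [hNval, aug_single', one_smul]
        have h3 : (m : T →₀ ℤ)
            = ∑ g : G, permHom g ((F (Finsupp.single (ε (g⁻¹ • t)) 1) : ↥(aug T).ker) : T →₀ ℤ) := by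
          rw [h2, hN]
          rw [show ((∑ g : G, homAct0 g F) (Finsupp.single (ε t) 1)) =
            ∑ g : G, (homAct0 g F) (Finsupp.single (ε t) 1) from
              sum_apply' (fun g => homAct0 g F) _]
          rw [show (((∑ g : G, homAct0 g F (Finsupp.single (ε t) 1) : ↥(aug T).ker)) : T →₀ ℤ)
              = ∑ g : G, ((homAct0 g F (Finsupp.single (ε t) 1) : ↥(aug T).ker) : T →₀ ℤ) from
            map_sum (aug T).ker.subtype _ Finset.univ]
          apply Finset.sum_congr rfl
          intro g _
          rw [homAct0_single, permHom0_coe]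
          congr 2
          rw [hε g⁻¹ t]
        rw [h3, Finsupp.finset_sum_apply]
        apply Finset.sum_congr rfl
        intro g _
        rw [permHom_apply']
      rw [h1, show (∑ g : G, c (g⁻¹ • t)) = ∑ g : G, c (g • t) from
        Fintype.sum_equiv (Equiv.inv G) _ _ (fun g => rfl)]
      exact dvd_sum_orbit t c
    obtain ⟨m₀, hm₀⟩ := norm_exists (m : T →₀ ℤ) hmcoeinv hmdvd
    have haugm₀ : aug T m₀ = 0 := by
      have h1 : aug T (∑ g : G, permHom g m₀) = (Fintype.card G : ℤ) * aug T m₀ := by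
        rw [map_sum, Finset.sum_congr rfl (fun g _ => aug_permHom g m₀), Finset.sum_const]
        rw [nsmul_eq_mul, Fintype.card]
      rw [hm₀] at h1
      have h2 : aug T (m : T →₀ ℤ) = 0 := m.2
      rw [h2] at h1
      have h3 : (Fintype.card G : ℤ) ≠ 0 := by
        simp [Fintype.card_ne_zero]
      exact (mul_eq_zero.mp h1.symm).resolve_left h3
    set m₀' : ↥(aug T).ker := ⟨m₀, haugm₀⟩ with hm₀'
    have hm₀sum : (∑ g : G, permHom0 g m₀') = m := by
      apply Subtype.ext
      rw [show ((∑ g : G, permHom0 g m₀' : ↥(aug T).ker) : T →₀ ℤ)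
          = ∑ g : G, ((permHom0 g m₀' : ↥(aug T).ker) : T →₀ ℤ) from
        map_sum (aug T).ker.subtype _ Finset.univ]
      rw [Finset.sum_congr rfl (fun g _ => permHom0_coe g m₀')]
      exact hm₀
    set c0 : (S →₀ ℤ) →+ ↥(aug T).ker := (zmultiplesHom _ m₀').comp (aug S) with hc0
    have hNrmc0 : (∑ g : G, homAct0 g c0) = N := by
      apply homext'
      intro s
      rw [show ((∑ g : G, homAct0 g c0) (Finsupp.single s 1))
          = ∑ g : G, (homAct0 g c0) (Finsupp.single s 1) from sum_apply' _ _]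
      have h1 : ∀ g : G, (homAct0 g c0) (Finsupp.single s 1) = permHom0 g m₀' := by
        intro g
        rw [homAct0_single]
        congr 1
        show (aug S (Finsupp.single (g⁻¹ • s) 1)) • m₀' = m₀'
        rw [aug_single', one_smul]
      rw [Finset.sum_congr rfl (fun g _ => h1 g), hm₀sum, hNval, aug_single', one_smul]
    have hNrmF' : (∑ g : G, homAct0 g (F - c0)) = 0 := by
      rw [Finset.sum_congr rfl (fun g _ => homAct0_sub g F c0), Finset.sum_sub_distrib,
        ← hN, hNrmc0, sub_self]
    obtain ⟨k, Y, hkY⟩ := stepD hT (F - c0) hNrmF'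
    have hfres : f = ((∑ γ : G, (homAct0 γ (k γ) - k γ))
        + ∑ h : G, (homAct0 h (Y h) - Y h)).comp (aug S).ker.subtype := by
      rw [← hkY]
      have hc0res : c0.comp (aug S).ker.subtype = 0 := by
        apply AddMonoidHom.ext
        intro q
        show (aug S ((aug S).ker.subtype q)) • m₀' = 0
        rw [show aug S ((aug S).ker.subtype q) = 0 from q.2, zero_smul]
      rw [AddMonoidHom.sub_comp, hresF, hc0res, sub_zero]
    rw [hfres, AddMonoidHom.add_comp, comp_sum_subtype, comp_sum_subtype]
    apply AddSubgroup.add_mem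
    · apply AddSubgroup.sum_mem
      intro γ _
      apply AddSubgroup.subset_closure
      refine ⟨γ, (k γ).comp (aug S).ker.subtype, ?_⟩
      rw [AddMonoidHom.sub_comp, res_homAct0]
    · apply AddSubgroup.sum_mem
      intro h _
      apply AddSubgroup.subset_closure
      refine ⟨h, (Y h).comp (aug S).ker.subtype, ?_⟩
      rw [AddMonoidHom.sub_comp, res_homAct0]
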